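/- There exists a finite group G such that the order of the commutator subgroup of G does not divide the order of the automorphism group of G. -/

import Mathlib

/-!
Let `H` be the Heisenberg group over `𝔽₃` (order 27) and let `C₄` act on it through the rotation
`(x, y, z) ↦ (-y, x, z - xy)`. In `G = H ⋊ C₄` (order 108) every element of `H` is a product of
two commutators, so `27 ∣ |G'|`. The rotation has a square root in `Aut H` commuting with the
action, which extends to an automorphism of `G` of order 8. An automorphism of `G` is determined
by the images of two generators of orders 4 and 2, and `G` has 18 and 9 elements of these orders,
so `|Aut G| ≤ 162 < 8 · 27`; hence `27 ∤ |Aut G|`.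
-/

open scoped commutatorElement

/-- `⟨x, y, z⟩` stands for the unitriangular matrix `[[1, x, z], [0, 1, y], [0, 0, 1]]`. -/
@[ext] structure Heisenberg (R : Type*) where
  x : R
  y : R
  z : R
deriving DecidableEq

namespace Heisenberg

def equivProd (R : Type*) : Heisenberg R ≃ R × R × R where
  toFun p := (p.x, p.y, p.z)
  invFun t := ⟨t.1, t.2.1, t.2.2⟩

instance {R : Type*} [Fintype R] : Fintype (Heisenberg R) := Fintype.ofEquiv _ (equivProd R).symm

lemma card_eq (R : Type*) : Nat.card (Heisenberg R) = Nat.card R ^ 3 := by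
  rw [Nat.card_congr (equivProd R), Nat.card_prod, Nat.card_prod]
  ring

variable {R : Type*} [CommRing R]

instance : Mul (Heisenberg R) := ⟨fun p q => ⟨p.x + q.x, p.y + q.y, p.z + q.z + p.x * q.y⟩⟩
instance : One (Heisenberg R) := ⟨⟨0, 0, 0⟩⟩
instance : Inv (Heisenberg R) := ⟨fun p => ⟨-p.x, -p.y, p.x * p.y - p.z⟩⟩

@[simp] lemma mul_x (p q : Heisenberg R) : (p * q).x = p.x + q.x := rfl
@[simp] lemma mul_y (p q : Heisenberg R) : (p * q).y = p.y + q.y := rfl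
@[simp] lemma mul_z (p q : Heisenberg R) : (p * q).z = p.z + q.z + p.x * q.y := rfl
@[simp] lemma one_x : (1 : Heisenberg R).x = 0 := rfl
@[simp] lemma one_y : (1 : Heisenberg R).y = 0 := rfl
@[simp] lemma one_z : (1 : Heisenberg R).z = 0 := rfl
@[simp] lemma inv_x (p : Heisenberg R) : p⁻¹.x = -p.x := rfl
@[simp] lemma inv_y (p : Heisenberg R) : p⁻¹.y = -p.y := rfl
@[simp] lemma inv_z (p : Heisenberg R) : p⁻¹.z = p.x * p.y - p.z := rfl

instance : Group (Heisenberg R) where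
  mul_assoc p q r := by ext <;> simp only [mul_x, mul_y, mul_z] <;> ring
  one_mul p := by ext <;> simp
  mul_one p := by ext <;> simp
  inv_mul_cancel p := by ext <;> simp

lemma mk_eq_mul_mul (p : Heisenberg R) :
    p = ⟨p.x, 0, 0⟩ * ⟨0, p.y, 0⟩ * ⟨0, 0, p.z - p.x * p.y⟩ := by
  ext <;> simp

lemma commutatorElement_mk_x_mk_y (a b : R) :
    ⁅(⟨a, 0, 0⟩ : Heisenberg R), (⟨0, b, 0⟩ : Heisenberg R)⁆ = ⟨0, 0, a * b⟩ := by
  ext <;> simp [commutatorElement_def]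

lemma mk_x_pow (a : R) (n : ℕ) : (⟨a, 0, 0⟩ : Heisenberg R) ^ n = ⟨n * a, 0, 0⟩ := by
  induction n with
  | zero => ext <;> simp
  | succ n ih => ext <;> simp [pow_succ, ih, add_mul]

lemma mk_y_pow (b : R) (n : ℕ) : (⟨0, b, 0⟩ : Heisenberg R) ^ n = ⟨0, n * b, 0⟩ := by
  induction n with
  | zero => ext <;> simp
  | succ n ih => ext <;> simp [pow_succ, ih, add_mul]

lemma eq_top_of_mk_x_mem_of_mk_y_mem {n : ℕ} [NeZero n] {H : Subgroup (Heisenberg (ZMod n))}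
    (hX : ⟨1, 0, 0⟩ ∈ H) (hY : ⟨0, 1, 0⟩ ∈ H) : H = ⊤ := by
  have hx (a : ZMod n) : (⟨a, 0, 0⟩ : Heisenberg (ZMod n)) ∈ H := by
    simpa [mk_x_pow] using pow_mem hX a.val
  have hy (b : ZMod n) : (⟨0, b, 0⟩ : Heisenberg (ZMod n)) ∈ H := by
    simpa [mk_y_pow] using pow_mem hY b.val
  have hz (c : ZMod n) : (⟨0, 0, c⟩ : Heisenberg (ZMod n)) ∈ H := by
    have h := mul_mem (mul_mem (mul_mem (hx c) (hy 1)) (inv_mem (hx c))) (inv_mem (hy 1))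
    rwa [← commutatorElement_def, commutatorElement_mk_x_mk_y, mul_one] at h
  refine eq_top_iff.2 fun p _ => ?_
  rw [mk_eq_mul_mul p]
  exact mul_mem (mul_mem (hx _) (hy _)) (hz _)

def rotate : MulAut (Heisenberg R) where
  toFun p := ⟨-p.y, p.x, p.z - p.x * p.y⟩
  invFun p := ⟨p.y, -p.x, p.z - p.x * p.y⟩
  left_inv p := by ext <;> simp [mul_comm]
  right_inv p := by ext <;> simp [mul_comm]
  map_mul' p q := by ext <;> simp <;> ring

@[simp] lemma rotate_apply (p : Heisenberg R) : rotate p = ⟨-p.y, p.x, p.z - p.x * p.y⟩ := rfl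

lemma rotate_sq_apply (p : Heisenberg R) : (rotate ^ 2) p = ⟨-p.x, -p.y, p.z⟩ := by
  ext <;> simp [sq, mul_comm]

lemma rotate_pow_four : (rotate : MulAut (Heisenberg R)) ^ 4 = 1 := by
  ext p <;> simp [pow_mul rotate 2 2, sq (rotate ^ 2), rotate_sq_apply]

lemma rotate_sq_ne_one (h2 : (2 : R) ≠ 0) : (rotate : MulAut (Heisenberg R)) ^ 2 ≠ 1 := by
  intro h
  have h1 : (-1 : R) = 1 := by
    simpa [rotate_sq_apply] using congrArg Heisenberg.x (DFunLike.congr_fun h ⟨1, 0, 0⟩)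
  exact h2 (by linear_combination -h1)

def rotation : Multiplicative (ZMod 4) →* MulAut (Heisenberg R) where
  toFun g := rotate ^ g.toAdd.val
  map_one' := by simp
  map_mul' g h := by
    simp only [toAdd_mul, ZMod.val_add, ← pow_add]
    exact (pow_eq_pow_mod _ rotate_pow_four).symm

lemma rotation_ofAdd_two :
    rotation (.ofAdd 2 : Multiplicative (ZMod 4)) = (rotate : MulAut (Heisenberg R)) ^ 2 :=
  rfl

section CharThree

variable [CharP R 3]

/-- The linear part `[[-1, -1], [1, -1]]` squares to that of `rotate` and has determinant
`2 = -1`; the quadratic term `x² - xy - y²` on the centre makes the map multiplicative. -/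
def sqrtRotate : MulAut (Heisenberg R) where
  toFun p := ⟨-p.x - p.y, p.x - p.y, p.x ^ 2 - p.x * p.y - p.y ^ 2 - p.z⟩
  invFun p := ⟨p.x - p.y, p.x + p.y, -p.x ^ 2 + p.y ^ 2 - p.x * p.y - p.z⟩
  left_inv p := by
    have h3 : (3 : R) = 0 := CharP.cast_eq_zero R 3
    ext <;> dsimp only
    · linear_combination -p.x * h3
    · linear_combination -p.y * h3
    · linear_combination -p.x * p.y * h3
  right_inv p := by
    have h3 : (3 : R) = 0 := CharP.cast_eq_zero R 3
    ext <;> dsimp only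
    · linear_combination -p.x * h3
    · linear_combination -p.y * h3
    · linear_combination -p.x * p.y * h3
  map_mul' p q := by
    have h3 : (3 : R) = 0 := CharP.cast_eq_zero R 3
    ext <;> simp only [mul_x, mul_y, mul_z]
    · ring
    · ring
    · linear_combination (p.x * q.x - p.x * q.y - p.y * q.y) * h3

@[simp] lemma sqrtRotate_apply (p : Heisenberg R) :
    sqrtRotate p = ⟨-p.x - p.y, p.x - p.y, p.x ^ 2 - p.x * p.y - p.y ^ 2 - p.z⟩ := rfl

lemma sqrtRotate_sq : (sqrtRotate : MulAut (Heisenberg R)) ^ 2 = rotate := by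
  have h3 : (3 : R) = 0 := CharP.cast_eq_zero R 3
  ext p <;> simp only [sq, MulAut.mul_apply, sqrtRotate_apply, rotate_apply]
  · linear_combination p.y * h3
  · linear_combination -p.x * h3
  · linear_combination 2 * p.x * p.y * h3

lemma orderOf_sqrtRotate : orderOf (sqrtRotate : MulAut (Heisenberg R)) = 8 := by
  have h2 : ((2 : ℕ) : R) ≠ 0 := by
    rw [Ne, CharP.cast_eq_zero_iff R 3]
    decide
  refine orderOf_eq_prime_pow (p := 2) (n := 2) ?_ ?_
  · rw [show 2 ^ 2 = 2 * 2 from rfl, pow_mul, sqrtRotate_sq]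
    exact rotate_sq_ne_one (by exact_mod_cast h2)
  · rw [show 2 ^ (2 + 1) = 2 * 4 from rfl, pow_mul, sqrtRotate_sq]
    exact rotate_pow_four

lemma commute_sqrtRotate_rotation (g : Multiplicative (ZMod 4)) :
    Commute (sqrtRotate : MulAut (Heisenberg R)) (rotation g) := by
  rw [rotation, MonoidHom.coe_mk, OneHom.coe_mk, ← sqrtRotate_sq, ← pow_mul]
  exact (Commute.refl _).pow_right _

end CharThree

end Heisenberg

namespace SemidirectProduct

variable {N G : Type*} [Group N] [Group G] {φ : G →* MulAut N}

instance [DecidableEq N] [DecidableEq G] : DecidableEq (N ⋊[φ] G) := equivProd.decidableEq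

instance [Fintype N] [Fintype G] : Fintype (N ⋊[φ] G) := Fintype.ofEquiv _ equivProd.symm

def congrLeft (f : MulAut N) (hf : ∀ g, Commute f (φ g)) : MulAut (N ⋊[φ] G) :=
  congr f (MulEquiv.refl G) fun g => by simpa [MulAut.mul_def] using (hf g).eq

lemma congrLeft_pow_apply (f : MulAut N) (hf : ∀ g, Commute f (φ g)) (n : ℕ) (x : N ⋊[φ] G) :
    (congrLeft f hf ^ n) x = ⟨(f ^ n) x.left, x.right⟩ := by
  induction n generalizing x with
  | zero => rfl
  | succ n ih => rw [pow_succ, MulAut.mul_apply, ih, pow_succ, MulAut.mul_apply]; rfl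

lemma orderOf_congrLeft (f : MulAut N) (hf : ∀ g, Commute f (φ g)) :
    orderOf (congrLeft f hf) = orderOf f := by
  refine orderOf_eq_orderOf_iff.2 fun n => ⟨fun h => ?_, fun h => ?_⟩
  · ext p
    simpa [congrLeft_pow_apply] using congrArg left (DFunLike.congr_fun h (inl p))
  · ext x <;> simp [congrLeft_pow_apply, h]

end SemidirectProduct

lemma MulAut.card_le_of_closure_pair_eq_top {G : Type*} [Group G] [Finite G] {a b : G}
    (hab : Subgroup.closure {a, b} = ⊤)
    (P Q : G → Prop) (hP : ∀ φ : MulAut G, P (φ a)) (hQ : ∀ φ : MulAut G, Q (φ b)) :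
    Nat.card (MulAut G) ≤ Nat.card {g // P g} * Nat.card {g // Q g} := by
  let images (φ : MulAut G) : {g // P g} × {g // Q g} := (⟨φ a, hP φ⟩, ⟨φ b, hQ φ⟩)
  have h_inj : Function.Injective images := by
    intro φ ψ h
    simp only [images, Prod.mk.injEq, Subtype.mk.injEq] at h
    have : (φ : G →* G) = ψ := MonoidHom.eq_of_eqOn_dense hab (by simp [Set.EqOn, h])
    exact MulEquiv.toMonoidHom_injective this
  rw [← Nat.card_prod]
  exact Nat.card_le_card_of_injective images h_inj

abbrev HeisenbergC4 (R : Type*) [CommRing R] :=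
  Heisenberg R ⋊[Heisenberg.rotation] Multiplicative (ZMod 4)

namespace HeisenbergC4

open SemidirectProduct Heisenberg

variable {R : Type*} [CommRing R]

def rot : HeisenbergC4 R := inr (.ofAdd 1)

lemma rot_sq : (rot : HeisenbergC4 R) ^ 2 = inr (.ofAdd 2) := by
  rw [rot, ← map_pow]
  rfl

lemma rot_mul_inl_mul_rot_inv (p : Heisenberg R) :
    rot * inl p * rot⁻¹ = (inl (rotate p) : HeisenbergC4 R) := by
  rw [rot, ← map_inv, ← inl_aut]
  rfl

lemma commutatorElement_rot_sq_inl (p : Heisenberg R) :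
    ⁅(rot : HeisenbergC4 R) ^ 2, inl p⁆ =
      (inl ⟨-2 * p.x, -2 * p.y, 2 * p.x * p.y⟩ : HeisenbergC4 R) := by
  rw [commutatorElement_def, rot_sq, ← map_inv, ← inl_aut, ← map_inv, ← map_mul]
  congr 1
  ext <;> simp only [rotation_ofAdd_two, rotate_sq_apply, mul_x, mul_y, mul_z, inv_x, inv_y, inv_z] <;>
    ring

lemma inl_mem_commutator (h2 : IsUnit (2 : R)) (q : Heisenberg R) :
    (inl q : HeisenbergC4 R) ∈ commutator (HeisenbergC4 R) := by
  have mem (g h : HeisenbergC4 R) : ⁅g, h⁆ ∈ commutator (HeisenbergC4 R) :=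
    Subgroup.commutator_mem_commutator (Subgroup.mem_top g) (Subgroup.mem_top h)
  obtain ⟨v, hv⟩ : ∃ v : R, v * 2 = 1 := ⟨↑h2.unit⁻¹, h2.val_inv_mul⟩
  have key : (inl q : HeisenbergC4 R) =
      ⁅(rot : HeisenbergC4 R) ^ 2, inl ⟨-v * q.x, -v * q.y, 0⟩⁆ *
      inl ⁅(⟨q.z - v * q.x * q.y, 0, 0⟩ : Heisenberg R), (⟨0, 1, 0⟩ : Heisenberg R)⁆ := by
    rw [commutatorElement_rot_sq_inl, commutatorElement_mk_x_mk_y, ← map_mul]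
    congr 1
    ext <;> simp only [mul_x, mul_y, mul_z]
    · linear_combination -q.x * hv
    · linear_combination -q.y * hv
    · linear_combination (-v * q.x * q.y) * hv
  rw [key, map_commutatorElement]
  exact mul_mem (mem _ _) (mem _ _)

lemma card_pow_three_dvd_card_commutator (h2 : IsUnit (2 : R)) :
    Nat.card R ^ 3 ∣ Nat.card (commutator (HeisenbergC4 R)) := by
  have hle : (inl : Heisenberg R →* HeisenbergC4 R).range ≤ commutator (HeisenbergC4 R) := by
    rintro _ ⟨q, rfl⟩
    exact inl_mem_commutator h2 q
  rw [← Heisenberg.card_eq, Nat.card_congr (MonoidHom.ofInjective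
    (inl_injective : Function.Injective (inl : Heisenberg R →* HeisenbergC4 R))).toEquiv]
  exact Subgroup.card_dvd_of_le hle

lemma eight_dvd_card_mulAut [CharP R 3] : 8 ∣ Nat.card (MulAut (HeisenbergC4 R)) := by
  have h := orderOf_dvd_natCard (congrLeft sqrtRotate commute_sqrtRotate_rotation :
    MulAut (HeisenbergC4 R))
  rwa [orderOf_congrLeft, orderOf_sqrtRotate] at h

def flip : HeisenbergC4 R := inl ⟨0, 1, 0⟩ * rot ^ 2

lemma closure_rot_flip {n : ℕ} [NeZero n] :
    Subgroup.closure {rot, flip} = (⊤ : Subgroup (HeisenbergC4 (ZMod n))) := by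
  set H := Subgroup.closure {(rot : HeisenbergC4 (ZMod n)), flip}
  have hrot : rot ∈ H := Subgroup.subset_closure (Set.mem_insert _ _)
  have hY : inl ⟨0, 1, 0⟩ ∈ H := by
    have h := mul_mem (Subgroup.subset_closure (Set.mem_insert_of_mem _ rfl) : flip ∈ H)
      (inv_mem (pow_mem hrot 2))
    rwa [flip, mul_inv_cancel_right] at h
  have hX : inl ⟨1, 0, 0⟩ ∈ H := by
    have h := inv_mem (mul_mem (mul_mem hrot hY) (inv_mem hrot))
    have hrotY : (rotate ⟨0, 1, 0⟩)⁻¹ = (⟨1, 0, 0⟩ : Heisenberg (ZMod n)) := by ext <;> simp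
    rwa [rot_mul_inl_mul_rot_inv, ← map_inv, hrotY] at h
  have hinl : H.comap inl = ⊤ := eq_top_of_mk_x_mem_of_mk_y_mem hX hY
  have hinr (g : Multiplicative (ZMod 4)) : inr g ∈ H := by
    have h : inr g = (rot : HeisenbergC4 (ZMod n)) ^ g.toAdd.val := by
      rw [rot, ← map_pow, ← ofAdd_nsmul, nsmul_one, ZMod.natCast_zmod_val]
      rfl
    rw [h]
    exact pow_mem hrot _
  refine eq_top_iff.2 fun x _ => ?_
  rw [← inl_left_mul_inr_right x]
  exact mul_mem (hinl ▸ Subgroup.mem_top x.left : x.left ∈ H.comap inl) (hinr _)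

lemma card_mulAut_zmod_three_le : Nat.card (MulAut (HeisenbergC4 (ZMod 3))) ≤ 162 := by
  have hP : ∀ φ : MulAut (HeisenbergC4 (ZMod 3)), (φ rot) ^ 4 = 1 ∧ (φ rot) ^ 2 ≠ 1 := by
    intro φ
    simp only [← map_pow, ne_eq, φ.map_eq_one_iff]
    decide
  have hQ : ∀ φ : MulAut (HeisenbergC4 (ZMod 3)), (φ flip) ^ 2 = 1 ∧ φ flip ≠ 1 := by
    intro φ
    simp only [← map_pow, ne_eq, φ.map_eq_one_iff]
    decide
  have h4 : Nat.card {g : HeisenbergC4 (ZMod 3) // g ^ 4 = 1 ∧ g ^ 2 ≠ 1} = 18 := by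
    rw [Nat.card_eq_fintype_card]
    decide
  have h2 : Nat.card {g : HeisenbergC4 (ZMod 3) // g ^ 2 = 1 ∧ g ≠ 1} = 9 := by
    rw [Nat.card_eq_fintype_card]
    decide
  have := MulAut.card_le_of_closure_pair_eq_top closure_rot_flip
    (fun g => g ^ 4 = 1 ∧ g ^ 2 ≠ 1) (fun g => g ^ 2 = 1 ∧ g ≠ 1) hP hQ
  rwa [h4, h2] at this

end HeisenbergC4

theorem stmt_19 :
    ∃ (G : Type) (_ : Group G) (_ : Fintype G),
      ¬ (Nat.card (commutator G) ∣ Nat.card (MulAut G)) := by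
  refine ⟨HeisenbergC4 (ZMod 3), inferInstance, inferInstance, fun hdvd => ?_⟩
  have h27 : 27 ∣ Nat.card (MulAut (HeisenbergC4 (ZMod 3))) := by
    refine (Nat.card_zmod 3 ▸ HeisenbergC4.card_pow_three_dvd_card_commutator ?_).trans hdvd
    exact IsUnit.of_mul_eq_one (a := (2 : ZMod 3)) 2 rfl
  have h216 : 8 * 27 ∣ Nat.card (MulAut (HeisenbergC4 (ZMod 3))) :=
    Nat.Coprime.mul_dvd_of_dvd_of_dvd (by norm_num) HeisenbergC4.eight_dvd_card_mulAut h27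
  have := Nat.le_of_dvd Nat.card_pos h216
  have := HeisenbergC4.card_mulAut_zmod_three_le
  omega
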